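/- LP bound for energy of codes: let h : {1,...,n} → (0,∞) and M ∈ {2,...,q^n}. If a real polynomial f(z) = Σ_{i=0}^n f_i K_i^{(n,q)}(z) satisfies f_0 > 0, f_i ≥ 0 for i = 1,...,n, f(0) > 0, and f(i) ≤ h(i) for i = 1,...,n, then every code C ⊆ F_q^n with |C| = M has potential energy E_h(C) = Σ_{x≠y ∈ C} h(d(x,y)) ≥ M(f_0 M - f(0)). -/

import Mathlib

open Finset

/-- Generalized binomial coefficient `C(z, j) = z(z-1)⋯(z-j+1)/j!` for real `z`. -/
noncomputable def realChoose (z : ℝ) (j : ℕ) : ℝ :=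
  (∏ k ∈ Finset.range j, (z - k)) / (Nat.factorial j)

/-- The Krawtchouk polynomial `K_i^{(n,q)}(z)`. -/
noncomputable def kraw (n q i : ℕ) (z : ℝ) : ℝ :=
  ∑ j ∈ Finset.range (i + 1),
    (-1 : ℝ) ^ j * ((q : ℝ) - 1) ^ (i - j) * (q : ℝ) ^ j *
      ((n - j).choose (n - i) : ℝ) * realChoose z j

/-- The distance distribution `B_i` of a code `C ⊆ F_q^n`. -/
noncomputable def distDistrib {n q : ℕ} (C : Finset (Fin n → Fin q)) (i : ℕ) : ℝ :=
  (((C ×ˢ C).filter (fun p => hammingDist p.1 p.2 = i)).card : ℝ) / (C.card : ℝ)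

/-- The dual distance distribution (MacWilliams transform) `B'_i` of a code. -/
noncomputable def dualDistDistrib {n q : ℕ} (C : Finset (Fin n → Fin q)) (i : ℕ) : ℝ :=
  (∑ j ∈ Finset.range (n + 1), distDistrib C j * kraw n q i j) / (C.card : ℝ)

/-!
Delsarte's argument. Realise the alphabet as `ZMod q` with its standard additive character `ψ`.
Then `K_i(d(x, y))` is the sum of `ψ(u ⬝ᵥ (x - y))` over the vectors `u` of Hamming weight `i`,
so `∑_{x,y ∈ C} K_i(d(x, y)) = ∑_{wt u = i} |∑_{x ∈ C} ψ(u ⬝ᵥ x)|² ≥ 0`. Expanding `f` in the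
Krawtchouk basis with `f_i ≥ 0` for `i ≥ 1` gives `∑_{x,y ∈ C} f(d(x, y)) ≥ f_0 M²`; the diagonal
contributes `M f(0)`, and off the diagonal `f ≤ h`.
-/

lemma prod_ite_mem_eq_sum_powerset {ι R : Type*} [DecidableEq ι] [CommRing R]
    (S D : Finset ι) (x y : R) :
    ∏ k ∈ S, (if k ∈ D then x else y) = ∑ A ∈ (S ∩ D).powerset, (x - y) ^ #A * y ^ (#S - #A) := by
  have hsplit : ∀ k, (if k ∈ D then x else y) = (if k ∈ D then x - y else 0) + y := by
    intro k; split_ifs <;> ring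
  have hpow : (S ∩ D).powerset = {A ∈ S.powerset | A ⊆ D} := by
    ext A; simp only [mem_powerset, subset_inter_iff, mem_filter]
  rw [prod_congr rfl fun k _ => hsplit k, prod_add, hpow, sum_filter]
  refine sum_congr rfl fun A hA => ?_
  rw [prod_ite_zero, prod_const, prod_const, card_sdiff_of_subset (mem_powerset.1 hA)]
  simp only [← subset_iff, ite_mul, zero_mul]

lemma realChoose_natCast (d j : ℕ) : realChoose d j = d.choose j := by
  rw [realChoose, ← descPochhammer_eval_eq_prod_range, Nat.cast_choose_eq_descPochhammer_div]

lemma card_filter_subset_powersetCard {n i : ℕ} (hi : i ≤ n) (A : Finset (Fin n)) :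
    #{S ∈ powersetCard i univ | A ⊆ S} = (n - #A).choose (n - i) := by
  have hA : n - #A = #Aᶜ := by rw [card_compl, Fintype.card_fin]
  rw [hA, ← card_powersetCard]
  refine card_nbij' compl compl (fun S hS => ?_) (fun T hT => ?_) (fun S _ => compl_compl S)
    (fun T _ => compl_compl T)
  · simp only [coe_filter, mem_powersetCard, subset_univ, true_and, Set.mem_ofPred_eq] at hS
    simp [compl_subset_compl.2 hS.2, card_compl, hS.1]
  · simp only [mem_coe, mem_powersetCard] at hT
    simp only [coe_filter, mem_powersetCard, subset_univ, true_and, Set.mem_ofPred_eq, card_compl,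
      Fintype.card_fin, hT.2, subset_compl_comm.1 hT.1, and_true]
    omega

lemma kraw_card_eq_sum_powersetCard {n i : ℕ} (q : ℕ) (hi : i ≤ n) (D : Finset (Fin n)) :
    kraw n q i #D = ∑ S ∈ powersetCard i univ, ∏ k ∈ S, (if k ∈ D then (-1 : ℝ) else q - 1) := by
  -- Write `-1 = -q + (q - 1)`, expand each product over the subsets `A ⊆ S ∩ D`, and count
  -- the `i`-sets `S` containing a given `A`.
  set g : ℕ → ℝ := fun j => (-q : ℝ) ^ j * (q - 1) ^ (i - j)
  have hprod : ∀ S ∈ powersetCard i univ, ∏ k ∈ S, (if k ∈ D then (-1 : ℝ) else q - 1) =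
      ∑ A ∈ (S ∩ D).powerset, g #A := by
    intro S hS
    rw [prod_ite_mem_eq_sum_powerset, (mem_powersetCard.1 hS).2]
    exact sum_congr rfl fun A _ => by simp only [g]; ring_nf
  rw [sum_congr rfl hprod, sum_comm' (t' := D.powerset)
    (s' := fun A => {S ∈ powersetCard i univ | A ⊆ S}) (by
      intro S A; simp only [mem_powerset, subset_inter_iff, mem_filter]; tauto)]
  simp_rw [sum_const, card_filter_subset_powersetCard hi, nsmul_eq_mul]
  rw [sum_powerset_apply_card (fun m => ((n - m).choose (n - i) : ℝ) * g m), kraw]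
  have hD : #D ≤ n := card_le_univ D |>.trans_eq (Fintype.card_fin n)
  rw [sum_subset (range_subset_range.2 (by omega : i + 1 ≤ n + 1)) fun j hj hji => ?_,
    sum_subset (range_subset_range.2 (by omega : #D + 1 ≤ n + 1)) fun j hj hjD => ?_]
  · refine sum_congr rfl fun j _ => ?_
    rw [realChoose_natCast, nsmul_eq_mul]
    simp only [g]
    ring
  · simp only [mem_range, not_lt] at hj hjD
    simp [Nat.choose_eq_zero_of_lt (by omega : #D < j)]
  · simp only [mem_range, not_lt] at hj hji
    simp [Nat.choose_eq_zero_of_lt (by omega : n - j < n - i)]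

lemma AddChar.map_sum_eq_prod {A M ι : Type*} [AddCommMonoid A] [CommMonoid M] (ψ : AddChar A M)
    (s : Finset ι) (g : ι → A) : ψ (∑ k ∈ s, g k) = ∏ k ∈ s, ψ (g k) := by
  simpa [← ofAdd_sum] using map_prod ψ.toMonoidHom (fun k => Multiplicative.ofAdd (g k)) s

lemma sum_sum_addChar_sub {G β : Type*} [AddCommGroup G] [Finite G] (ψ : AddChar G ℂ)
    (s : Finset β) (g : β → G) :
    ∑ x ∈ s, ∑ y ∈ s, ψ (g x - g y) = Complex.normSq (∑ x ∈ s, ψ (g x)) := by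
  simp_rw [sub_eq_add_neg, AddChar.map_add_eq_mul, AddChar.map_neg_eq_conj]
  rw [← sum_mul_sum, ← map_sum (starRingEnd ℂ), Complex.mul_conj]

def vectorsWithSupport {ι : Type*} [Fintype ι] [DecidableEq ι] (q : ℕ) [NeZero q]
    (S : Finset ι) : Finset (ι → ZMod q) :=
  Fintype.piFinset fun k => if k ∈ S then univ.erase 0 else {0}

section Delsarte

variable {ι : Type*} [Fintype ι] [DecidableEq ι] {n q i : ℕ} [NeZero q]

lemma sum_erase_zero_stdAddChar_mul (a : ZMod q) :
    ∑ b ∈ univ.erase 0, ZMod.stdAddChar (b * a) = if a = 0 then (q : ℂ) - 1 else -1 := by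
  rw [sum_erase_eq_sub (mem_univ 0), AddChar.sum_mulShift a (ZMod.isPrimitive_stdAddChar q),
    zero_mul, AddChar.map_zero_eq_one, ZMod.card]
  split_ifs <;> ring

lemma sum_vectorsWithSupport_stdAddChar_dotProduct (S : Finset ι) (c : ι → ZMod q) :
    ∑ u ∈ vectorsWithSupport q S, ZMod.stdAddChar (u ⬝ᵥ c) =
      ∏ k ∈ S, (if c k = 0 then (q : ℂ) - 1 else -1) := by
  simp_rw [vectorsWithSupport, dotProduct, AddChar.map_sum_eq_prod]
  rw [← prod_univ_sum _ fun k b => ZMod.stdAddChar (b * c k)]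
  rw [← prod_subset (subset_univ S) fun k _ hk => by simp [hk]]
  exact prod_congr rfl fun k hk => by rw [if_pos hk, sum_erase_zero_stdAddChar_mul]

lemma kraw_hammingNorm_eq_sum_stdAddChar (hi : i ≤ n) (c : Fin n → ZMod q) :
    (kraw n q i (hammingNorm c) : ℂ) = ∑ S ∈ powersetCard i univ,
      ∑ u ∈ vectorsWithSupport q S, ZMod.stdAddChar (u ⬝ᵥ c) := by
  rw [hammingNorm, kraw_card_eq_sum_powersetCard q hi]
  push_cast
  refine sum_congr rfl fun S _ => ?_
  rw [sum_vectorsWithSupport_stdAddChar_dotProduct]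
  refine prod_congr rfl fun k _ => ?_
  by_cases hk : c k = 0 <;> simp [hk]

lemma sum_kraw_hammingDist_nonneg_zmod (hi : i ≤ n) (C : Finset (Fin n → ZMod q)) :
    0 ≤ ∑ p ∈ C ×ˢ C, kraw n q i (hammingDist p.1 p.2) := by
  have hdist : ∀ x y : Fin n → ZMod q, hammingDist x y = hammingNorm (x - y) := fun x y => by
    rw [hammingDist_comm, hammingDist_eq_hammingNorm, neg_add_eq_sub]
  have hsq : ((∑ p ∈ C ×ˢ C, kraw n q i (hammingDist p.1 p.2) : ℝ) : ℂ) =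
      ((∑ S ∈ powersetCard i univ, ∑ u ∈ vectorsWithSupport q S,
        Complex.normSq (∑ x ∈ C, ZMod.stdAddChar (u ⬝ᵥ x)) : ℝ) : ℂ) := by
    push_cast
    simp_rw [hdist, kraw_hammingNorm_eq_sum_stdAddChar hi]
    rw [sum_comm]
    refine sum_congr rfl fun S _ => ?_
    rw [sum_comm]
    refine sum_congr rfl fun u _ => ?_
    simp_rw [sum_product, dotProduct_sub, sum_sum_addChar_sub]
  rw [Complex.ofReal_inj.1 hsq]
  exact sum_nonneg fun S _ => sum_nonneg fun u _ => Complex.normSq_nonneg _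

end Delsarte

lemma sum_kraw_hammingDist_nonneg {α : Type*} [Fintype α] [DecidableEq α] [Nonempty α] {n i : ℕ}
    (hi : i ≤ n) (C : Finset (Fin n → α)) :
    0 ≤ ∑ p ∈ C ×ˢ C, kraw n (Fintype.card α) i (hammingDist p.1 p.2) := by
  have : NeZero (Fintype.card α) := ⟨Fintype.card_ne_zero⟩
  let e : (Fin n → α) ≃ (Fin n → ZMod (Fintype.card α)) :=
    Equiv.piCongrRight fun _ => Fintype.equivOfCardEq (ZMod.card _).symm
  have hdist : ∀ x y, hammingDist (e x) (e y) = hammingDist x y := fun x y =>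
    hammingDist_comp _ fun _ => Equiv.injective _
  simpa [← prodMap_map_product, sum_map, hdist] using
    sum_kraw_hammingDist_nonneg_zmod hi (C.map e.toEmbedding)

lemma coeff_zero_mul_card_sq_le_sum_hammingDist {α : Type*} [Fintype α] [DecidableEq α]
    [Nonempty α] {n : ℕ} (f : ℝ → ℝ) (c : ℕ → ℝ)
    (hf : ∀ z, f z = ∑ i ∈ range (n + 1), c i * kraw n (Fintype.card α) i z)
    (hc : ∀ i, 1 ≤ i → i ≤ n → 0 ≤ c i) (C : Finset (Fin n → α)) :
    c 0 * #C ^ 2 ≤ ∑ p ∈ C ×ˢ C, f (hammingDist p.1 p.2) := by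
  have hkraw_zero : ∀ z, kraw n (Fintype.card α) 0 z = 1 := by simp [kraw, realChoose]
  have htail : 0 ≤ ∑ i ∈ range n,
      c (i + 1) * ∑ p ∈ C ×ˢ C, kraw n (Fintype.card α) (i + 1) (hammingDist p.1 p.2) :=
    sum_nonneg fun i hi => mul_nonneg (hc _ (by omega) (by simpa using hi))
      (sum_kraw_hammingDist_nonneg (by simpa using hi) C)
  simp_rw [hf, sum_comm (s := C ×ˢ C), ← mul_sum]
  rw [sum_range_succ']
  simp only [hkraw_zero, sum_const, card_product, nsmul_one]
  push_cast
  linarith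

theorem LP_energy_bound_codes_general (n q M : ℕ) (hq : 2 ≤ q)
    (h : ℕ → ℝ)
    (f : ℝ → ℝ) (c : ℕ → ℝ)
    (hf : ∀ z : ℝ, f z = ∑ i ∈ Finset.range (n + 1), c i * kraw n q i z)
    (hD1b : ∀ i : ℕ, 1 ≤ i → i ≤ n → 0 ≤ c i)
    (hD2b : ∀ i : ℕ, 1 ≤ i → i ≤ n → f i ≤ h i)
    (C : Finset (Fin n → Fin q)) (hCM : C.card = M) :
    (M : ℝ) * (c 0 * M - f 0) ≤
      ∑ p ∈ (C ×ˢ C).filter (fun p => p.1 ≠ p.2), h (hammingDist p.1 p.2) := by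
  have : Nonempty (Fin q) := ⟨⟨0, by omega⟩⟩
  have hLP := coeff_zero_mul_card_sq_le_sum_hammingDist f c (by simpa using hf) hD1b C
  have hdiag : ∑ p ∈ (C ×ˢ C).filter (fun p => p.1 = p.2), f (hammingDist p.1 p.2) = M * f 0 := by
    simp [← diag_eq_filter, diag, hCM]
  have hoff : ∑ p ∈ (C ×ˢ C).filter (fun p => p.1 ≠ p.2), f (hammingDist p.1 p.2) ≤
      ∑ p ∈ (C ×ˢ C).filter (fun p => p.1 ≠ p.2), h (hammingDist p.1 p.2) :=
    sum_le_sum fun p hp => hD2b _ (hammingDist_pos.2 (mem_filter.1 hp).2)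
      (hammingDist_le_card_fintype.trans_eq (Fintype.card_fin n))
  rw [← sum_filter_add_sum_filter_not (C ×ˢ C) (fun p => p.1 = p.2), hdiag, hCM] at hLP
  linarith

theorem LP_energy_bound_codes (n q M : ℕ) (hn : 1 ≤ n) (hq : 2 ≤ q)
    (hM2 : 2 ≤ M) (hMq : M ≤ q ^ n)
    (h : ℕ → ℝ) (hpos : ∀ i : ℕ, 1 ≤ i → i ≤ n → 0 < h i)
    (f : ℝ → ℝ) (c : ℕ → ℝ)
    (hf : ∀ z : ℝ, f z = ∑ i ∈ Finset.range (n + 1), c i * kraw n q i z)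
    (hD1a : 0 < c 0) (hD1b : ∀ i : ℕ, 1 ≤ i → i ≤ n → 0 ≤ c i)
    (hD2a : 0 < f 0) (hD2b : ∀ i : ℕ, 1 ≤ i → i ≤ n → f i ≤ h i)
    (C : Finset (Fin n → Fin q)) (hCM : C.card = M) :
    (M : ℝ) * (c 0 * M - f 0) ≤
      ∑ p ∈ (C ×ˢ C).filter (fun p => p.1 ≠ p.2), h (hammingDist p.1 p.2) :=
  LP_energy_bound_codes_general n q M hq h f c hf hD1b hD2b C hCM
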